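/- arXiv:1510.04395 — 4 statements merged into one kernel-verified Lean document; each statement's English description precedes it below -/
import Mathlib

section
/- Set B_τ = 1, C_τ = τ and B̄_τ = 1 − τ = (1/2)P₀(τ) − ξ₁P₁(τ) for τ ∈ [0,1]. Suppose Ā : [0,1]² → ℝ has the form Ā(τ,σ) = α_{(0,0)} + α_{(0,1)}P₁(σ) + α_{(1,0)}P₁(τ) + Σ_{i+j>1} α_{(i,j)} P_i(τ)P_j(σ) (with, say, only finitely many nonzero coefficients α_{(i,j)}), where α_{(0,0)} is an arbitrary real number, α_{(0,1)} − α_{(1,0)} = −√3/6, and α_{(i,j)} = α_{(j,i)} for all i + j > 1. Then the symplectic conditions hold: B̄_τ = B_τ(1 − C_τ) for all τ ∈ [0,1], and B_τ(B̄_σ − Ā(τ,σ)) = B_σ(B̄_τ − Ā(σ,τ)) for all τ, σ ∈ [0,1]; consequently the corresponding csRKN method is symplectic for the second-order system q̈ = −M∇V(q) with M constant symmetric. -/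
/-!
Since `B ≡ 1`, the second symplectic condition says exactly that the skew part
`Ā(τ,σ) − Ā(σ,τ)` equals `τ − σ`. In the Legendre expansion the skew part is
`Σ (α_{(i,j)} − α_{(j,i)}) P_i(τ) P_j(σ)`, and the symmetry hypothesis kills every term
except `(i,j) = (0,1), (1,0)`; these contribute `(α_{(0,1)} − α_{(1,0)})(P₁(σ) − P₁(τ))
= −(√3/6) · 2√3 (σ − τ) = τ − σ`.
-/

open Real

/-- The normalized shifted Legendre polynomial on `[0,1]`, via the Rodrigues formula. -/
noncomputable def legP (n : ℕ) : ℝ → ℝ :=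
  fun t => (Real.sqrt (2 * n + 1) / n.factorial) * iteratedDeriv n (fun s => (s ^ 2 - s) ^ n) t

open Finset

lemma legP_zero (t : ℝ) : legP 0 t = 1 := by
  simp [legP]

lemma legP_one (t : ℝ) : legP 1 t = √3 * (2 * t - 1) := by
  have hderiv : HasDerivAt (fun s : ℝ => (s ^ 2 - s) ^ 1) (2 * t - 1) t := by
    simpa using ((hasDerivAt_id' t).pow 2).fun_sub (hasDerivAt_id' t)
  have hthree : (2 : ℝ) * (1 : ℕ) + 1 = 3 := by norm_num
  rw [legP, iteratedDeriv_one, hderiv.deriv, hthree]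
  norm_num

lemma sum_sum_sub_sum_sum_swap (a : ℕ → ℕ → ℝ) (p : ℕ → ℝ → ℝ) (s : Finset ℕ) (x y : ℝ) :
    ∑ i ∈ s, ∑ j ∈ s, a i j * p i x * p j y - ∑ i ∈ s, ∑ j ∈ s, a i j * p i y * p j x =
      ∑ i ∈ s, ∑ j ∈ s, (a i j - a j i) * p i x * p j y := by
  rw [sum_comm (s := s) (t := s) (f := fun i j => a i j * p i y * p j x), ← sum_sub_distrib]
  refine sum_congr rfl fun i _ => ?_
  rw [← sum_sub_distrib]
  exact sum_congr rfl fun j _ => by ring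

lemma sum_sum_antisymm_mul_of_symm_of_one_lt_add {N : ℕ} (hN : 2 ≤ N) (a : ℕ → ℕ → ℝ)
    (hsymm : ∀ i j : ℕ, 1 < i + j → a i j = a j i) (F : ℕ → ℕ → ℝ) :
    ∑ i ∈ range N, ∑ j ∈ range N, (a i j - a j i) * F i j =
      (a 0 1 - a 1 0) * (F 0 1 - F 1 0) := by
  rw [← sum_product' (f := fun i j => (a i j - a j i) * F i j),
    sum_eq_add_of_mem (0, 1) (1, 0) (by simp; omega) (by simp; omega) (by simp)]
  · ring
  rintro ⟨i, j⟩ - hij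
  -- the remaining pairs have `i + j ≠ 1`, so either `i = j = 0` or the symmetry hypothesis applies
  have hskew : a i j = a j i := by
    rcases Nat.lt_or_ge (i + j) 2 with h | h
    · obtain ⟨rfl, rfl⟩ : i = 0 ∧ j = 0 := by simp only [ne_eq, Prod.mk.injEq] at hij; omega
      rfl
    · exact hsymm i j (by omega)
  simp [hskew]

theorem stmt_7 (α : ℕ → ℕ → ℝ) (N : ℕ)
    -- only finitely many nonzero coefficients
    (hfin : ∀ i j : ℕ, N ≤ i ∨ N ≤ j → α i j = 0)
    (hcoef : α 0 1 - α 1 0 = -(Real.sqrt 3) / 6)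
    (hsymm : ∀ i j : ℕ, 1 < i + j → α i j = α j i)
    (Abar : ℝ → ℝ → ℝ)
    (hA : ∀ τ σ : ℝ, Abar τ σ =
      ∑ i ∈ Finset.range N, ∑ j ∈ Finset.range N, α i j * legP i τ * legP j σ)
    (B C Bbar : ℝ → ℝ)
    (hB : ∀ τ, B τ = 1) (hC : ∀ τ, C τ = τ) (hBbar : ∀ τ, Bbar τ = 1 - τ) :
    -- the symplectic conditions hold
    (∀ τ ∈ Set.Icc (0:ℝ) 1, Bbar τ = B τ * (1 - C τ)) ∧
    (∀ τ ∈ Set.Icc (0:ℝ) 1, ∀ σ ∈ Set.Icc (0:ℝ) 1,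
      B τ * (Bbar σ - Abar τ σ) = B σ * (Bbar τ - Abar σ τ)) := by
  have hsqrt3 : √3 * √3 = 3 := mul_self_sqrt (by norm_num)
  have hN : 2 ≤ N := by
    by_contra! h
    rw [hfin 0 1 (by omega), hfin 1 0 (by omega)] at hcoef
    nlinarith [sqrt_pos.mpr (show (0 : ℝ) < 3 by norm_num)]
  have hskew : ∀ τ σ : ℝ, Abar τ σ - Abar σ τ = τ - σ := by
    intro τ σ
    rw [hA, hA, sum_sum_sub_sum_sum_swap]
    simp only [mul_assoc]
    rw [sum_sum_antisymm_mul_of_symm_of_one_lt_add hN α hsymm, hcoef]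
    simp only [legP_zero, legP_one]
    linear_combination (2 * (τ - σ) / 6) * hsqrt3
  refine ⟨fun τ _ => by rw [hBbar, hB, hC]; ring, fun τ _ σ _ => ?_⟩
  rw [hB, hB, hBbar, hBbar]
  linarith [hskew τ σ]
end

section
/- For every real parameter θ, the 2-stage RKN tableau with nodes c₁ = (3−√3)/6, c₂ = (3+√3)/6, weights b₁ = b₂ = 1/2, secondary weights b̄₁ = (3+√3)/12, b̄₂ = (3−√3)/12, and matrix ā₁₁ = ā₂₂ = (1+6θ)/12, ā₁₂ = (1−√3−6θ)/12, ā₂₁ = (1+√3−6θ)/12, satisfies: b̄_i = b_i(1 − c_i) for i = 1,2; B(4): Σ_i b_i c_i^{κ−1} = 1/κ for κ = 1,2,3,4; CN(2): Σ_j ā_{ij} = c_i²/2 for i = 1,2; and DN(2): Σ_i b_i ā_{ij} = b_j c_j²/2 − b_j c_j + b_j/2 for j = 1,2. -/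
/-!
The nodes are the roots of the shifted Legendre polynomial `6x² − 6x + 1`, so they satisfy the
Vieta relations `c₁ + c₂ = 1`, `c₁ c₂ = 1/6`. B(4) is the exactness of the two-point
Gauss–Legendre rule on cubics, which only uses these relations; in the row and column sums of
CN(2) and DN(2) the parameter `θ` cancels, and what is left is the node equation
`c² = c − 1/6`.
-/

open Real

section GaussLegendre

variable {x y : ℝ}

theorem gaussLegendre_node_sq (hsum : x + y = 1) (hprod : x * y = 1 / 6) :
    x ^ 2 = x - 1 / 6 := by
  linear_combination x * hsum - hprod

theorem gaussLegendre_moment (hsum : x + y = 1) (hprod : x * y = 1 / 6) {k : ℕ} (hk : k < 4) :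
    1 / 2 * x ^ k + 1 / 2 * y ^ k = 1 / (k + 1) := by
  interval_cases k
  · norm_num
  · linear_combination hsum / 2
  · linear_combination (x + y + 1) / 2 * hsum - hprod
  -- `x³ + y³ = s³ − 3ps` with `s = x + y`, `p = x y`
  · linear_combination ((x + y) ^ 2 + (x + y) + 1 / 2) / 2 * hsum - 3 * (x + y) / 2 * hprod

end GaussLegendre

theorem gaussLegendre_nodes_add : (3 - √3) / 6 + (3 + √3) / 6 = 1 := by ring

theorem gaussLegendre_nodes_mul : (3 - √3) / 6 * ((3 + √3) / 6) = 1 / 6 := by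
  linear_combination (-1 / 36) * sq_sqrt (show (0 : ℝ) ≤ 3 by norm_num)

theorem stmt_12 (θ : ℝ) :
    let c : Fin 2 → ℝ := ![(3 - Real.sqrt 3) / 6, (3 + Real.sqrt 3) / 6]
    let b : Fin 2 → ℝ := ![1 / 2, 1 / 2]
    let bbar : Fin 2 → ℝ := ![(3 + Real.sqrt 3) / 12, (3 - Real.sqrt 3) / 12]
    let A : Matrix (Fin 2) (Fin 2) ℝ :=
      !![(1 + 6 * θ) / 12, (1 - Real.sqrt 3 - 6 * θ) / 12;
         (1 + Real.sqrt 3 - 6 * θ) / 12, (1 + 6 * θ) / 12]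
    -- b̄_i = b_i (1 − c_i)
    (∀ i, bbar i = b i * (1 - c i)) ∧
    -- B(4)
    (∀ κ : ℕ, 1 ≤ κ → κ ≤ 4 → ∑ i, b i * c i ^ (κ - 1) = 1 / (κ : ℝ)) ∧
    -- CN(2)
    (∀ i, ∑ j, A i j = c i ^ 2 / 2) ∧
    -- DN(2)
    (∀ j, ∑ i, b i * A i j = b j * c j ^ 2 / 2 - b j * c j + b j / 2) := by
  intro c b bbar A
  have hsq₁ : ((3 - √3) / 6) ^ 2 = (3 - √3) / 6 - 1 / 6 :=
    gaussLegendre_node_sq gaussLegendre_nodes_add gaussLegendre_nodes_mul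
  have hsq₂ : ((3 + √3) / 6) ^ 2 = (3 + √3) / 6 - 1 / 6 :=
    gaussLegendre_node_sq ((add_comm _ _).trans gaussLegendre_nodes_add)
      ((mul_comm _ _).trans gaussLegendre_nodes_mul)
  refine ⟨?_, ?_, ?_, ?_⟩
  · intro i
    fin_cases i <;>
      simp only [Fin.zero_eta, Fin.mk_one, Fin.isValue, Matrix.cons_val_zero,
        Matrix.cons_val_one, Matrix.cons_val_fin_one, bbar, b, c] <;>
      ring
  · intro κ hκ₁ hκ₄
    obtain ⟨k, rfl⟩ : ∃ k, κ = k + 1 := ⟨κ - 1, by omega⟩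
    simpa [Fin.sum_univ_two, b, c] using
      gaussLegendre_moment gaussLegendre_nodes_add gaussLegendre_nodes_mul (k := k) (by omega)
  · intro i
    fin_cases i <;>
      simp only [Fin.zero_eta, Fin.mk_one, Fin.isValue, Matrix.cons_val_zero, Matrix.cons_val_one,
        Matrix.of_apply, Matrix.cons_val', Matrix.cons_val_fin_one, Fin.sum_univ_two, A, c]
    · linear_combination (-1 / 2) * hsq₁
    · linear_combination (-1 / 2) * hsq₂
  · intro j
    fin_cases j <;>
      simp only [Fin.zero_eta, Fin.mk_one, Fin.isValue, Matrix.cons_val_zero, Matrix.cons_val_one,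
        Matrix.of_apply, Matrix.cons_val', Matrix.cons_val_fin_one, Fin.sum_univ_two, A, b, c]
    · linear_combination (-1 / 4) * hsq₁
    · linear_combination (-1 / 4) * hsq₂
end

section
/- For every real parameter θ, the 3-stage RKN tableau with nodes c₁ = (5−√15)/10, c₂ = 1/2, c₃ = (5+√15)/10, weights b₁ = 5/18, b₂ = 4/9, b₃ = 5/18, secondary weights b̄₁ = (5+√15)/36, b̄₂ = 2/9, b̄₃ = (5−√15)/36, and matrix ā₁₁ = ā₃₃ = (2+30θ)/135, ā₁₂ = (19−6√15−120θ)/270, ā₁₃ = (62−15√15+120θ)/540, ā₂₁ = (19+6√15−120θ)/432, ā₂₂ = (1+15θ)/27, ā₂₃ = (19−6√15−120θ)/432, ā₃₁ = (62+15√15+120θ)/540, ā₃₂ = (19+6√15−120θ)/270, satisfies the discrete symplectic conditions: b̄_i = b_i(1 − c_i) for i = 1, 2, 3, and b_i(b̄_j − ā_{ij}) = b_j(b̄_i − ā_{ji}) for all i, j ∈ {1, 2, 3}. -/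
/-!
All entries are affine in `θ` and `√15` with rational coefficients and the weights `b` are
rational, so after evaluating the entries every condition is a polynomial identity in `θ` and
`√15`; in particular `√15 ^ 2 = 15` is never needed.
-/

open Real

theorem stmt_13 (θ : ℝ) :
    let c : Fin 3 → ℝ := ![(5 - Real.sqrt 15) / 10, 1 / 2, (5 + Real.sqrt 15) / 10]
    let b : Fin 3 → ℝ := ![5 / 18, 4 / 9, 5 / 18]
    let bbar : Fin 3 → ℝ := ![(5 + Real.sqrt 15) / 36, 2 / 9, (5 - Real.sqrt 15) / 36]
    let A : Matrix (Fin 3) (Fin 3) ℝ :=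
      !![(2 + 30 * θ) / 135, (19 - 6 * Real.sqrt 15 - 120 * θ) / 270,
           (62 - 15 * Real.sqrt 15 + 120 * θ) / 540;
         (19 + 6 * Real.sqrt 15 - 120 * θ) / 432, (1 + 15 * θ) / 27,
           (19 - 6 * Real.sqrt 15 - 120 * θ) / 432;
         (62 + 15 * Real.sqrt 15 + 120 * θ) / 540, (19 + 6 * Real.sqrt 15 - 120 * θ) / 270,
           (2 + 30 * θ) / 135]
    (∀ i, bbar i = b i * (1 - c i)) ∧
    (∀ i j, b i * (bbar j - A i j) = b j * (bbar i - A j i)) := by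
  intro c b bbar A
  refine ⟨fun i => ?_, fun i j => ?_⟩
  · fin_cases i <;> simp only [c, b, bbar, Fin.reduceFinMk, Matrix.cons_val] <;> ring
  · fin_cases i <;> fin_cases j <;>
      simp only [b, bbar, A, Fin.reduceFinMk, Matrix.cons_val, Matrix.of_apply] <;> ring
end

section
/- For every real parameter θ, the 3-stage RKN tableau with nodes c₁ = (5−√15)/10, c₂ = 1/2, c₃ = (5+√15)/10, weights b₁ = 5/18, b₂ = 4/9, b₃ = 5/18, secondary weights b̄₁ = (5+√15)/36, b̄₂ = 2/9, b̄₃ = (5−√15)/36, and matrix ā₁₁ = ā₃₃ = (2+30θ)/135, ā₁₂ = (19−6√15−120θ)/270, ā₁₃ = (62−15√15+120θ)/540, ā₂₁ = (19+6√15−120θ)/432, ā₂₂ = (1+15θ)/27, ā₂₃ = (19−6√15−120θ)/432, ā₃₁ = (62+15√15+120θ)/540, ā₃₂ = (19+6√15−120θ)/270, satisfies: b̄_i = b_i(1 − c_i) for all i; B(6): Σ_i b_i c_i^{κ−1} = 1/κ for κ = 1,…,6; CN(3): Σ_j ā_{ij} c_j^{κ−1} = c_i^{κ+1}/(κ(κ+1))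 for all i and κ = 1, 2; and DN(3): Σ_i b_i c_i^{κ−1} ā_{ij} = b_j c_j^{κ+1}/(κ(κ+1)) − b_j c_j/κ + b_j/(κ+1) for all j and κ = 1, 2. -/
/-!
The nodes are the zeros of the shifted Legendre polynomial of degree 3 and the weights are the
corresponding Gauss–Legendre weights, so B(6) is the exactness of 3-point Gauss quadrature on
polynomials of degree at most 5. All entries of the tableau are affine in `θ` and lie in `ℚ(√15)`,
so each of the finitely many conditions is a polynomial identity in `s = √15` and `θ` that holds
modulo `s² = 15`; it therefore holds for either square root of 15 in any field of
characteristic zero.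
-/

namespace RKN

variable {K : Type*} [Field K] {m : ℕ}

def B (b c : Fin m → K) (ξ : ℕ) : Prop :=
  ∀ κ : ℕ, 1 ≤ κ → κ ≤ ξ → ∑ i, b i * c i ^ (κ - 1) = 1 / (κ : K)

def CN (A : Matrix (Fin m) (Fin m) K) (c : Fin m → K) (η : ℕ) : Prop :=
  ∀ i, ∀ κ : ℕ, 1 ≤ κ → κ ≤ η - 1 →
    ∑ j, A i j * c j ^ (κ - 1) = c i ^ (κ + 1) / ((κ : K) * (κ + 1))

def DN (A : Matrix (Fin m) (Fin m) K) (b c : Fin m → K) (ζ : ℕ) : Prop :=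
  ∀ j, ∀ κ : ℕ, 1 ≤ κ → κ ≤ ζ - 1 →
    ∑ i, b i * c i ^ (κ - 1) * A i j
      = b j * c j ^ (κ + 1) / ((κ : K) * (κ + 1)) - b j * c j / κ + b j / (κ + 1)

end RKN

section GaussRKN

variable {K : Type*} [Field K] (s θ : K)

def gaussNodes : Fin 3 → K := ![(5 - s) / 10, 1 / 2, (5 + s) / 10]

def gaussWeights : Fin 3 → K := ![5 / 18, 4 / 9, 5 / 18]

def gaussRKNBbar : Fin 3 → K := ![(5 + s) / 36, 2 / 9, (5 - s) / 36]

def gaussRKNMatrix : Matrix (Fin 3) (Fin 3) K :=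
  !![(2 + 30 * θ) / 135, (19 - 6 * s - 120 * θ) / 270, (62 - 15 * s + 120 * θ) / 540;
     (19 + 6 * s - 120 * θ) / 432, (1 + 15 * θ) / 27, (19 - 6 * s - 120 * θ) / 432;
     (62 + 15 * s + 120 * θ) / 540, (19 + 6 * s - 120 * θ) / 270, (2 + 30 * θ) / 135]

variable [CharZero K]

theorem gaussRKNBbar_eq (i : Fin 3) :
    gaussRKNBbar s i = gaussWeights i * (1 - gaussNodes s i) := by
  fin_cases i <;>
    simp only [gaussRKNBbar, gaussWeights, gaussNodes, Matrix.cons_val_zero, Matrix.cons_val_one,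
      Matrix.cons_val, Fin.isValue, Fin.zero_eta, Fin.mk_one, Fin.reduceFinMk] <;>
    ring

variable {s}

theorem gaussWeights_B (hs : s ^ 2 = 15) : RKN.B gaussWeights (gaussNodes s) 6 := by
  intro κ h1 h6
  interval_cases κ <;>
    simp only [gaussWeights, gaussNodes, Fin.sum_univ_three, Matrix.cons_val_zero,
      Matrix.cons_val_one, Matrix.cons_val, Fin.isValue] <;>
    grind

theorem gaussRKNMatrix_CN (hs : s ^ 2 = 15) : RKN.CN (gaussRKNMatrix s θ) (gaussNodes s) 3 := by
  intro i κ h1 h2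
  fin_cases i <;> interval_cases κ <;>
    simp only [gaussRKNMatrix, gaussNodes, Fin.sum_univ_three, Matrix.of_apply, Matrix.cons_val',
      Matrix.cons_val_fin_one, Matrix.cons_val_zero, Matrix.cons_val_one, Matrix.cons_val,
      Fin.isValue, Fin.zero_eta, Fin.mk_one, Fin.reduceFinMk] <;>
    grind

theorem gaussRKNMatrix_DN (hs : s ^ 2 = 15) :
    RKN.DN (gaussRKNMatrix s θ) gaussWeights (gaussNodes s) 3 := by
  intro j κ h1 h2
  fin_cases j <;> interval_cases κ <;>
    simp only [gaussWeights, gaussRKNMatrix, gaussNodes, Fin.sum_univ_three, Matrix.of_apply,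
      Matrix.cons_val', Matrix.cons_val_fin_one, Matrix.cons_val_zero, Matrix.cons_val_one,
      Matrix.cons_val, Fin.isValue, Fin.zero_eta, Fin.mk_one, Fin.reduceFinMk] <;>
    grind

end GaussRKN

open Real

theorem stmt_14 (θ : ℝ) :
    let c : Fin 3 → ℝ := ![(5 - Real.sqrt 15) / 10, 1 / 2, (5 + Real.sqrt 15) / 10]
    let b : Fin 3 → ℝ := ![5 / 18, 4 / 9, 5 / 18]
    let bbar : Fin 3 → ℝ := ![(5 + Real.sqrt 15) / 36, 2 / 9, (5 - Real.sqrt 15) / 36]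
    let A : Matrix (Fin 3) (Fin 3) ℝ :=
      !![(2 + 30 * θ) / 135, (19 - 6 * Real.sqrt 15 - 120 * θ) / 270,
           (62 - 15 * Real.sqrt 15 + 120 * θ) / 540;
         (19 + 6 * Real.sqrt 15 - 120 * θ) / 432, (1 + 15 * θ) / 27,
           (19 - 6 * Real.sqrt 15 - 120 * θ) / 432;
         (62 + 15 * Real.sqrt 15 + 120 * θ) / 540, (19 + 6 * Real.sqrt 15 - 120 * θ) / 270,
           (2 + 30 * θ) / 135]
    -- b̄_i = b_i (1 − c_i)
    (∀ i, bbar i = b i * (1 - c i)) ∧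
    -- B(6)
    (∀ κ : ℕ, 1 ≤ κ → κ ≤ 6 → ∑ i, b i * c i ^ (κ - 1) = 1 / (κ : ℝ)) ∧
    -- CN(3)
    (∀ i, ∀ κ : ℕ, 1 ≤ κ → κ ≤ 2 →
      ∑ j, A i j * c j ^ (κ - 1) = c i ^ (κ + 1) / ((κ : ℝ) * (κ + 1))) ∧
    -- DN(3)
    (∀ j, ∀ κ : ℕ, 1 ≤ κ → κ ≤ 2 →
      ∑ i, b i * c i ^ (κ - 1) * A i j
        = b j * c j ^ (κ + 1) / ((κ : ℝ) * (κ + 1)) - b j * c j / κ + b j / (κ + 1)) := by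
  have hs : √15 ^ 2 = 15 := sq_sqrt (by norm_num)
  exact ⟨gaussRKNBbar_eq _, gaussWeights_B hs, gaussRKNMatrix_CN θ hs, gaussRKNMatrix_DN θ hs⟩
end
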